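/- arXiv:1911.04484 — 4 statements merged into one kernel-verified Lean document; each statement's English description precedes it below -/
import Mathlib

section
/- Let $x_2^{(2)}, x_2^{(1)}, x_3^{(2)}, x_1^{(1)}$ be positive reals and $c$ a positive real. Define $c_2 = \frac{c\,x_2^{(2)}x_2^{(1)} + x_3^{(2)}x_1^{(1)}}{x_2^{(2)}x_2^{(1)} + x_3^{(2)}x_1^{(1)}}$. Then $(c_2 x_2^{(2)})\cdot(\frac{c}{c_2}x_2^{(1)}) = c\, x_2^{(2)}x_2^{(1)}$, and moreover $\frac{x_3^{(2)}(x_2^{(2)}x_2^{(1)} + x_3^{(2)}x_1^{(1)})}{x_2^{(2)}(c\,x_2^{(2)}x_2^{(1)} + x_3^{(2)}x_1^{(1)})} + \frac{x_2^{(1)}(c\,x_2^{(2)}x_2^{(1)} + c\,x_3^{(2)}x_1^{(1)})}{x_1^{(1)}(c\,x_2^{(2)}x_2^{(1)} + x_3^{(2)}x_1^{(1)})} = \frac{x_3^{(2)}}{x_2^{(2)}} + \frac{x_2^{(1)}}{x_1^{(1)}}$. -/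
/-- for positive reals and `c₂ = (c x₂⁽²⁾x₂⁽¹⁾ + x₃⁽²⁾x₁⁽¹⁾)/(x₂⁽²⁾x₂⁽¹⁾ + x₃⁽²⁾x₁⁽¹⁾)`,
one has `(c₂ x₂⁽²⁾)((c/c₂) x₂⁽¹⁾) = c x₂⁽²⁾x₂⁽¹⁾`, and the invariance identity for the
crystal operator `e₂^c` of the `D₆⁽¹⁾`-geometric crystal. -/
theorem e2_invariance (x22 x21 x32 x11 c : ℝ)
    (hx22 : 0 < x22) (hx21 : 0 < x21) (hx32 : 0 < x32) (hx11 : 0 < x11) (hc : 0 < c)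
    (c2 : ℝ) (hc2 : c2 = (c * x22 * x21 + x32 * x11) / (x22 * x21 + x32 * x11)) :
    (c2 * x22) * (c / c2 * x21) = c * x22 * x21 ∧
    x32 * (x22 * x21 + x32 * x11) / (x22 * (c * x22 * x21 + x32 * x11)) +
      x21 * (c * x22 * x21 + c * x32 * x11) / (x11 * (c * x22 * x21 + x32 * x11)) =
      x32 / x22 + x21 / x11 := by
  have hd : 0 < x22 * x21 + x32 * x11 := by positivity
  have hn : 0 < c * x22 * x21 + x32 * x11 := by positivity
  have hc2pos : 0 < c2 := hc2 ▸ div_pos hn hd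
  constructor
  · field_simp
  · field_simp
    ring
end

section
/- Let $x_6^{(3)}, x_6^{(2)}, x_6^{(1)}, x_4^{(4)}, x_4^{(3)}, x_4^{(2)}, x_4^{(1)}$ be positive reals and $c>0$. Define $c_{6_1} = \frac{c\,A + B + C}{A+B+C}$ and $c_{6_2} = \frac{c\,A + c\,B + C}{c\,A + B + C}$ where $A = x_6^{(3)}(x_6^{(2)})^2 x_6^{(1)}$, $B = x_6^{(2)}x_6^{(1)}x_4^{(4)}x_4^{(3)}$, $C = x_4^{(4)}x_4^{(3)}x_4^{(2)}x_4^{(1)}$. Then $(c_{6_1}x_6^{(3)})(c_{6_2}x_6^{(2)})(\frac{c}{c_{6_1}c_{6_2}}x_6^{(1)}) = c\, x_6^{(3)}x_6^{(2)}x_6^{(1)}$, and $\varepsilon_6' = \frac{1}{c}\varepsilon_6$, where $\varepsilon_6 = \frac{1}{x_6^{(3)}}\big(1 + \frac{x_4^{(4)}x_4^{(3)}}{x_6^{(3)}x_6^{(2)}} + \frac{x_4^{(4)}x_4^{(3)}x_4^{(2)}x_4^{(1)}}{x_6^{(3)}(x_6^{(2)})^2 x_6^{(1)}}\big)$ and $\varepsilon_6'$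 is the same expression evaluated at $(c_{6_1}x_6^{(3)}, c_{6_2}x_6^{(2)}, \frac{c}{c_{6_1}c_{6_2}}x_6^{(1)}, x_4^{(4)}, x_4^{(3)}, x_4^{(2)}, x_4^{(1)})$. -/
/-- the geometric crystal axiom `ε₆(e₆^c x) = c⁻¹ ε₆(x)` for the
`D₆⁽¹⁾`-geometric crystal, with
`A = x₆⁽³⁾(x₆⁽²⁾)²x₆⁽¹⁾`, `B = x₆⁽²⁾x₆⁽¹⁾x₄⁽⁴⁾x₄⁽³⁾`, `C = x₄⁽⁴⁾x₄⁽³⁾x₄⁽²⁾x₄⁽¹⁾`,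
`c₆₁ = (cA+B+C)/(A+B+C)`, `c₆₂ = (cA+cB+C)/(cA+B+C)`; also the product identity
`(c₆₁x₆⁽³⁾)(c₆₂x₆⁽²⁾)((c/(c₆₁c₆₂))x₆⁽¹⁾) = c x₆⁽³⁾x₆⁽²⁾x₆⁽¹⁾`. -/
theorem eps6_axiom (x63 x62 x61 x44 x43 x42 x41 c : ℝ)
    (hx63 : 0 < x63) (hx62 : 0 < x62) (hx61 : 0 < x61) (hx44 : 0 < x44)
    (hx43 : 0 < x43) (hx42 : 0 < x42) (hx41 : 0 < x41) (hc : 0 < c)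
    (A B C c61 c62 : ℝ)
    (hA : A = x63 * x62 ^ 2 * x61) (hB : B = x62 * x61 * x44 * x43)
    (hC : C = x44 * x43 * x42 * x41)
    (hc61 : c61 = (c * A + B + C) / (A + B + C))
    (hc62 : c62 = (c * A + c * B + C) / (c * A + B + C)) :
    (c61 * x63) * (c62 * x62) * (c / (c61 * c62) * x61) = c * (x63 * x62 * x61) ∧
    (1 / (c61 * x63)) *
        (1 + x44 * x43 / ((c61 * x63) * (c62 * x62)) +
          x44 * x43 * x42 * x41 /
            ((c61 * x63) * (c62 * x62) ^ 2 * (c / (c61 * c62) * x61))) =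
      (1 / c) * ((1 / x63) *
        (1 + x44 * x43 / (x63 * x62) +
          x44 * x43 * x42 * x41 / (x63 * x62 ^ 2 * x61))) := by
  have hAp : 0 < A := by rw [hA]; positivity
  have hBp : 0 < B := by rw [hB]; positivity
  have hCp : 0 < C := by rw [hC]; positivity
  have h1 : 0 < A + B + C := by positivity
  have h2 : 0 < c * A + B + C := by positivity
  have h3 : 0 < c * A + c * B + C := by positivity
  have hc61p : 0 < c61 := by rw [hc61]; positivity
  have hc62p : 0 < c62 := by rw [hc62]; positivity
  subst hA hB hC
  constructor
  · field_simp
  · rw [hc61, hc62]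
    field_simp
    ring
end

section
/- Let $A = x_3^{(3)}(x_3^{(2)})^2 x_3^{(1)}$, $B = x_4^{(3)}x_3^{(2)}x_3^{(1)}x_2^{(2)}$, $C = x_4^{(3)}x_4^{(2)}x_2^{(2)}x_2^{(1)}$ with all variables positive real, and $c>0$. Define $c_{3_1} = \frac{cA+B+C}{A+B+C}$ and $c_{3_2} = \frac{cA+cB+C}{cA+B+C}$. Then $c_{3_1}\cdot c_{3_2} \cdot \frac{c}{c_{3_1}c_{3_2}} = c$ and the function $\varepsilon_3 = \frac{x_4^{(4)}}{x_3^{(3)}}\big(1+\frac{x_4^{(3)}x_2^{(2)}}{x_3^{(3)}x_3^{(2)}}+\frac{x_4^{(3)}x_4^{(2)}x_2^{(2)}x_2^{(1)}}{x_3^{(3)}(x_3^{(2)})^2x_3^{(1)}}\big)$ satisfies: evaluating $\varepsilon_3$ at $(c_{3_1}x_3^{(3)}, c_{3_2}x_3^{(2)}, \frac{c}{c_{3_1}c_{3_2}}x_3^{(1)})$ (other variables unchanged) gives $c^{-1}$ times its value at $(x_3^{(3)}, x_3^{(2)}, x_3^{(1)})$. -/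
/-- the geometric crystal axiom `ε₃(e₃^c x) = c⁻¹ ε₃(x)` for the
`D₆`-geometric crystal structure on `𝒱₁`, with `A = x₃⁽³⁾(x₃⁽²⁾)²x₃⁽¹⁾`,
`B = x₄⁽³⁾x₃⁽²⁾x₃⁽¹⁾x₂⁽²⁾`, `C = x₄⁽³⁾x₄⁽²⁾x₂⁽²⁾x₂⁽¹⁾`,
`c₃₁ = (cA+B+C)/(A+B+C)`, `c₃₂ = (cA+cB+C)/(cA+B+C)`; also
`c₃₁ · c₃₂ · (c/(c₃₁c₃₂)) = c`. -/
theorem eps3_axiom (x33 x32 x31 x43 x42 x44 x22 x21 c : ℝ)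
    (hx33 : 0 < x33) (hx32 : 0 < x32) (hx31 : 0 < x31) (hx43 : 0 < x43)
    (hx42 : 0 < x42) (hx44 : 0 < x44) (hx22 : 0 < x22) (hx21 : 0 < x21) (hc : 0 < c)
    (A B C c31 c32 : ℝ)
    (hA : A = x33 * x32 ^ 2 * x31) (hB : B = x43 * x32 * x31 * x22)
    (hC : C = x43 * x42 * x22 * x21)
    (hc31 : c31 = (c * A + B + C) / (A + B + C))
    (hc32 : c32 = (c * A + c * B + C) / (c * A + B + C)) :
    c31 * c32 * (c / (c31 * c32)) = c ∧
    (x44 / (c31 * x33)) *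
        (1 + x43 * x22 / ((c31 * x33) * (c32 * x32)) +
          x43 * x42 * x22 * x21 /
            ((c31 * x33) * (c32 * x32) ^ 2 * (c / (c31 * c32) * x31))) =
      c⁻¹ * ((x44 / x33) *
        (1 + x43 * x22 / (x33 * x32) +
          x43 * x42 * x22 * x21 / (x33 * x32 ^ 2 * x31))) := by
  have hA0 : 0 < A := by subst hA; positivity
  have hB0 : 0 < B := by subst hB; positivity
  have hC0 : 0 < C := by subst hC; positivity
  have hd1 : 0 < A + B + C := by linarith
  have hd2 : 0 < c * A + B + C := by positivity
  have hn2 : 0 < c * A + c * B + C := by positivity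
  have hc310 : 0 < c31 := by rw [hc31]; positivity
  have hc320 : 0 < c32 := by rw [hc32]; positivity
  constructor
  · field_simp
  · rw [hc31, hc32, hA, hB, hC] at *
    field_simp
    ring
end

section
/- Let $x_1^{(1)},\dots$ be the fifteen positive real coordinates and $c_1, c_2 > 0$. Define $e_0^{c}$ by the formulas of the paper (with $K$-factors) and define $e_1^{c}$ by $x_1^{(1)}\mapsto c\,x_1^{(1)}$ leaving all other coordinates fixed. Then $e_0^{c_1}$ and $e_1^{c_2}$ commute: $e_0^{c_1}(e_1^{c_2}(x)) = e_1^{c_2}(e_0^{c_1}(x))$. In particular, it suffices that none of the fourteen monomial-ratio terms of $K$ (nor those of $K_{3_1}, K_{3_2}, K_{4_1}, K_{4_2}, K_{4_3}, K_{5_1}, K_{6_1}, K_{6_2}$) involves the variable $x_1^{(1)}$, so all $K$-factors are unchanged by $e_1^{c_2}$. -/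
noncomputable section

/-- The fifteen coordinates `x_m⁽ˡ⁾` of the variety `𝒱₁` for `D₆⁽¹⁾`. -/
structure GCCoords where
  x63 : ℝ
  x44 : ℝ
  x33 : ℝ
  x22 : ℝ
  x52 : ℝ
  x43 : ℝ
  x32 : ℝ
  x62 : ℝ
  x42 : ℝ
  x51 : ℝ
  x11 : ℝ
  x21 : ℝ
  x31 : ℝ
  x41 : ℝ
  x61 : ℝ

namespace GCCoords

/-- All fifteen coordinates are positive. -/
def Pos (X : GCCoords) : Prop :=
  0 < X.x63 ∧ 0 < X.x44 ∧ 0 < X.x33 ∧ 0 < X.x22 ∧ 0 < X.x52 ∧ 0 < X.x43 ∧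
  0 < X.x32 ∧ 0 < X.x62 ∧ 0 < X.x42 ∧ 0 < X.x51 ∧ 0 < X.x11 ∧ 0 < X.x21 ∧
  0 < X.x31 ∧ 0 < X.x41 ∧ 0 < X.x61

/-- The fourteen monomial-ratio terms of the paper's `K`. -/
def t1 (X : GCCoords) : ℝ := X.x61
def t2 (X : GCCoords) : ℝ := X.x51 * X.x22 * X.x21 / (X.x33 * X.x32)
def t3 (X : GCCoords) : ℝ := X.x51 * X.x31 * X.x22 / (X.x42 * X.x33)
def t4 (X : GCCoords) : ℝ := X.x41 * X.x22 / X.x33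
def t5 (X : GCCoords) : ℝ := X.x51 * X.x32 * X.x31 / (X.x43 * X.x42)
def t6 (X : GCCoords) : ℝ := X.x41 * X.x32 / X.x43
def t7 (X : GCCoords) : ℝ := X.x42 * X.x41 / X.x62
def t8 (X : GCCoords) : ℝ := X.x22 * X.x21 / X.x63
def t9 (X : GCCoords) : ℝ := X.x62 * X.x22 * X.x21 / (X.x44 * X.x43)
def t10 (X : GCCoords) : ℝ := X.x42 * X.x22 * X.x21 / (X.x44 * X.x32)
def t11 (X : GCCoords) : ℝ := X.x43 * X.x42 * X.x22 * X.x21 / (X.x52 * X.x33 * X.x32)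
def t12 (X : GCCoords) : ℝ := X.x31 * X.x22 / X.x44
def t13 (X : GCCoords) : ℝ := X.x43 * X.x31 * X.x22 / (X.x52 * X.x33)
def t14 (X : GCCoords) : ℝ := X.x32 * X.x31 / X.x52

/-- The polynomial `K` of the paper. -/
def K (X : GCCoords) : ℝ :=
  t1 X + t2 X + t3 X + t4 X + t5 X + t6 X + t7 X + t8 X + t9 X + t10 X + t11 X +
    t12 X + t13 X + t14 X

def K31 (c : ℝ) (X : GCCoords) : ℝ :=
  c * t1 X + t2 X + c * t3 X + c * t4 X + c * t5 X + c * t6 X + c * t7 X + t8 X +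
    t9 X + t10 X + t11 X + c * t12 X + c * t13 X + c * t14 X

def K32 (c : ℝ) (X : GCCoords) : ℝ :=
  c * t1 X + t2 X + t3 X + t4 X + c * t5 X + c * t6 X + c * t7 X + t8 X + t9 X +
    t10 X + t11 X + t12 X + t13 X + c * t14 X

def K41 (c : ℝ) (X : GCCoords) : ℝ :=
  c * t1 X + t2 X + t3 X + c * t4 X + t5 X + c * t6 X + c * t7 X + t8 X + t9 X +
    t10 X + t11 X + t12 X + t13 X + t14 X

def K42 (c : ℝ) (X : GCCoords) : ℝ :=
  c * t1 X * (c * t1 X + c * t2 X + c * t3 X + c * t4 X + c * t5 X + c * t6 X +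
      c * t7 X + t8 X + t9 X + c * t10 X + c * t11 X + c * t12 X + c * t13 X +
      c * t14 X) +
  c * t7 X * (c * t1 X + c * t2 X + c * t3 X + c * t4 X + c * t5 X + c * t6 X +
      c * t7 X + t8 X + c * t9 X + c * t10 X + c * t11 X + c * t12 X + c * t13 X +
      c * t14 X) +
  t8 X * (c * t1 X + t2 X + t3 X + t4 X + t5 X + t6 X + c * t7 X + t8 X + t9 X +
      t10 X + t11 X + t12 X + t13 X + t14 X) +
  t9 X * (c * t1 X + t2 X + t3 X + t4 X + t5 X + t6 X + t7 X + t8 X + t9 X + t10 X +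
      t11 X + t12 X + t13 X + t14 X) +
  (c * t2 X + c * t3 X + c * t4 X + c * t5 X + c * t6 X + c * t10 X + c * t11 X +
      c * t12 X + c * t13 X + c * t14 X) * K X

def K43 (c : ℝ) (X : GCCoords) : ℝ :=
  c * t1 X + c * t2 X + c * t3 X + c * t4 X + c * t5 X + c * t6 X + c * t7 X + t8 X +
    t9 X + t10 X + c * t11 X + t12 X + c * t13 X + c * t14 X

def K51 (c : ℝ) (X : GCCoords) : ℝ :=
  c * t1 X + c * t2 X + c * t3 X + c * t4 X + c * t5 X + c * t6 X + c * t7 X + t8 X +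
    t9 X + t10 X + t11 X + t12 X + t13 X + t14 X

def K61 (c : ℝ) (X : GCCoords) : ℝ :=
  c * t1 X + t2 X + t3 X + t4 X + t5 X + t6 X + t7 X + t8 X + t9 X + t10 X + t11 X +
    t12 X + t13 X + t14 X

def K62 (c : ℝ) (X : GCCoords) : ℝ :=
  c * t1 X + c * t2 X + c * t3 X + c * t4 X + c * t5 X + c * t6 X + c * t7 X + t8 X +
    c * t9 X + c * t10 X + c * t11 X + c * t12 X + c * t13 X + c * t14 X

/-- The action `e₀^c` on the coordinates, as in the main theorem of the paper. -/
def e0 (c : ℝ) (X : GCCoords) : GCCoords where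
  x63 := X.x63 * (K62 c X / (c * K X))
  x44 := X.x44 * (K43 c X / (c * K X))
  x33 := X.x33 * (K32 c X / (c * K X))
  x22 := X.x22 / c
  x52 := X.x52 * (K51 c X / (c * K X))
  x43 := X.x43 * (K42 c X / (c * K X * K43 c X))
  x32 := X.x32 * (K31 c X / (c * K32 c X))
  x62 := X.x62 * (K61 c X / K62 c X)
  x42 := X.x42 * (K X * K41 c X / K42 c X)
  x51 := X.x51 * (K X / K51 c X)
  x11 := X.x11 / c
  x21 := X.x21 / c
  x31 := X.x31 * (K X / K31 c X)
  x41 := X.x41 * (K X / K41 c X)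
  x61 := X.x61 * (K X / K61 c X)

/-- The action `e₁^c`: `x₁⁽¹⁾ ↦ c x₁⁽¹⁾`, all other coordinates fixed. -/
def e1 (c : ℝ) (X : GCCoords) : GCCoords := { X with x11 := c * X.x11 }

end GCCoords

/-- the actions `e₀^{c₁}` and `e₁^{c₂}` on the fifteen positive
coordinates commute; in particular none of the polynomials
`K, K₃₁, K₃₂, K₄₁, K₄₂, K₄₃, K₅₁, K₆₁, K₆₂` involves `x₁⁽¹⁾`, so all `K`-factors are
unchanged by `e₁^{c₂}`. -/
theorem e0_e1_commute (X : GCCoords) (hX : X.Pos) (c1 c2 : ℝ)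
    (hc1 : 0 < c1) (hc2 : 0 < c2) :
    GCCoords.e0 c1 (GCCoords.e1 c2 X) = GCCoords.e1 c2 (GCCoords.e0 c1 X) ∧
    GCCoords.K (GCCoords.e1 c2 X) = GCCoords.K X ∧
    GCCoords.K31 c1 (GCCoords.e1 c2 X) = GCCoords.K31 c1 X ∧
    GCCoords.K32 c1 (GCCoords.e1 c2 X) = GCCoords.K32 c1 X ∧
    GCCoords.K41 c1 (GCCoords.e1 c2 X) = GCCoords.K41 c1 X ∧
    GCCoords.K42 c1 (GCCoords.e1 c2 X) = GCCoords.K42 c1 X ∧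
    GCCoords.K43 c1 (GCCoords.e1 c2 X) = GCCoords.K43 c1 X ∧
    GCCoords.K51 c1 (GCCoords.e1 c2 X) = GCCoords.K51 c1 X ∧
    GCCoords.K61 c1 (GCCoords.e1 c2 X) = GCCoords.K61 c1 X ∧
    GCCoords.K62 c1 (GCCoords.e1 c2 X) = GCCoords.K62 c1 X := by
  refine ⟨?_, rfl, rfl, rfl, rfl, rfl, rfl, rfl, rfl, rfl⟩
  unfold GCCoords.e0 GCCoords.e1
  congr 1
  exact mul_div_assoc c2 X.x11 c1

end
end
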